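/- arXiv:1705.07477 — 3 statements merged into one kernel-verified Lean document; each statement's English description precedes it below -/
import Mathlib

section
/- For mean estimation via SGD, the update θ_{t+1} = θ_t − η(θ_t − Y_t) with i.i.d. random vectors Y_t (mean θ̂, covariance Σ) and 0 < η < 1 satisfies ‖Cov(θ_a, θ_b)‖₂ ≤ K η(1−η)^{|a−b|} for a constant K depending only on Σ and ‖θ_1 − θ̂‖, uniformly over a, b. -/
/-!
Unrolling the recursion gives `θ_n = (1-η)^(n-1) θ_1 + ∑_{1 ≤ t < n} η (1-η)^(n-1-t) Y_t`.
Distinct `Y_t` are independent, hence uncorrelated, so only the common indices `t < min a b`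
contribute to `Cov(θ_a, θ_b)`, which is therefore the scalar multiple
`∑_t η² (1-η)^(a-1-t) (1-η)^(b-1-t)` of `Σ`. Each term is at most
`η² (1-η)^|a-b| (1-η)^(min a b - 1 - t)`, and the geometric series sums to at most `1/η`;
so `K = ‖Σ‖₂` works.
-/

open MeasureTheory ProbabilityTheory Finset

theorem affine_recurrence_eq_sum {R M : Type*} [Semiring R] [AddCommMonoid M] [Module R M]
    (c d : R) {x y : ℕ → M} (hx : ∀ t, x (t + 1) = c • x t + d • y t) {m n : ℕ} (hmn : m ≤ n) :
    x n = c ^ (n - m) • x m + ∑ t ∈ Ico m n, (c ^ (n - 1 - t) * d) • y t := by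
  induction n, hmn using Nat.le_induction with
  | base => simp
  | succ n hmn ih =>
    rw [hx, ih, sum_Ico_succ_top hmn, smul_add, smul_smul, smul_sum, add_assoc, Nat.add_sub_cancel,
      Nat.sub_self, pow_zero, one_mul, Nat.sub_add_comm hmn, pow_succ']
    congr 2
    refine sum_congr rfl fun t ht ↦ ?_
    rw [smul_smul, ← mul_assoc, ← pow_succ', Nat.sub_right_comm, Nat.sub_add_cancel]
    have := (mem_Ico.1 ht).2
    omega

def emaWeight (η : ℝ) (n t : ℕ) : ℝ := (1 - η) ^ (n - 1 - t) * η

theorem ema_eq_sum {Ω E : Type*} [AddCommGroup E] [Module ℝ E] {η : ℝ} {θ1 : E}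
    {Y θ : ℕ → Ω → E} (hinit : ∀ ω, θ 1 ω = θ1)
    (hstep : ∀ t ω, θ (t + 1) ω = (1 - η) • θ t ω + η • Y t ω) {n : ℕ} (hn : 1 ≤ n) :
    θ n = fun ω ↦ (1 - η) ^ (n - 1) • θ1 + ∑ t ∈ Ico 1 n, emaWeight η n t • Y t ω := by
  ext1 ω
  rw [← hinit ω]
  exact affine_recurrence_eq_sum (1 - η) η (x := (θ · ω)) (y := (Y · ω)) (hstep · ω) hn

theorem sum_pow_mul_pow_le_of_lt_one {q : ℝ} (hq0 : 0 ≤ q) (hq1 : q < 1) (a b : ℕ) {s : Finset ℕ}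
    (hs : s ⊆ range (min a b)) :
    ∑ t ∈ s, q ^ (a - 1 - t) * q ^ (b - 1 - t) ≤ q ^ ((a : ℤ) - b).natAbs / (1 - q) := by
  set m := min a b
  have hterm : ∀ t ∈ range m, q ^ (a - 1 - t) * q ^ (b - 1 - t)
      ≤ q ^ ((a : ℤ) - b).natAbs * q ^ (m - 1 - t) := by
    intro t ht
    rw [← pow_add, ← pow_add]
    exact pow_le_pow_of_le_one hq0 hq1.le (by have := mem_range.1 ht; omega)
  have hgeom : ∑ k ∈ range m, q ^ k ≤ 1 / (1 - q) := by
    simpa [← range_eq_Ico] using geom_sum_Ico_le_of_lt_one (m := 0) (n := m) hq0 hq1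
  calc ∑ t ∈ s, q ^ (a - 1 - t) * q ^ (b - 1 - t)
      ≤ ∑ t ∈ range m, q ^ (a - 1 - t) * q ^ (b - 1 - t) :=
        sum_le_sum_of_subset_of_nonneg hs fun _ _ _ ↦ by positivity
    _ ≤ ∑ t ∈ range m, q ^ ((a : ℤ) - b).natAbs * q ^ (m - 1 - t) := sum_le_sum hterm
    _ = q ^ ((a : ℤ) - b).natAbs * ∑ k ∈ range m, q ^ k := by
        rw [← mul_sum, sum_range_reflect (fun k ↦ q ^ k) m]
    _ ≤ q ^ ((a : ℤ) - b).natAbs / (1 - q) := by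
        rw [← mul_one_div]
        exact mul_le_mul_of_nonneg_left hgeom (by positivity)

theorem abs_sum_emaWeight_mul_emaWeight_le {η : ℝ} (hη0 : 0 < η) (hη1 : η ≤ 1) (a b : ℕ)
    {s : Finset ℕ} (hs : s ⊆ range (min a b)) :
    |∑ t ∈ s, emaWeight η a t * emaWeight η b t|
      ≤ η * (1 - η) ^ ((a : ℤ) - b).natAbs := by
  have hq0 : 0 ≤ 1 - η := by linarith
  have hsum : ∑ t ∈ s, emaWeight η a t * emaWeight η b t
      = η ^ 2 * ∑ t ∈ s, (1 - η) ^ (a - 1 - t) * (1 - η) ^ (b - 1 - t) := by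
    rw [mul_sum]
    exact sum_congr rfl fun _ _ ↦ by rw [emaWeight, emaWeight]; ring
  rw [hsum, abs_of_nonneg (by positivity)]
  calc η ^ 2 * ∑ t ∈ s, (1 - η) ^ (a - 1 - t) * (1 - η) ^ (b - 1 - t)
      ≤ η ^ 2 * ((1 - η) ^ ((a : ℤ) - b).natAbs / (1 - (1 - η))) :=
        mul_le_mul_of_nonneg_left (sum_pow_mul_pow_le_of_lt_one hq0 (by linarith) a b hs)
          (by positivity)
    _ = η * (1 - η) ^ ((a : ℤ) - b).natAbs := by
        rw [sub_sub_cancel]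
        field_simp

theorem EuclideanSpace.integral_apply {𝕜 ι Ω : Type*} [RCLike 𝕜] [Fintype ι] [MeasurableSpace Ω]
    {μ : Measure Ω} {f : Ω → EuclideanSpace 𝕜 ι} (hf : Integrable f μ) (i : ι) :
    (∫ ω, f ω ∂μ) i = ∫ ω, f ω i ∂μ :=
  ((EuclideanSpace.proj i).integral_comp_comm hf).symm

theorem EuclideanSpace.memLp_apply {𝕜 ι Ω : Type*} [RCLike 𝕜] [Fintype ι] [MeasurableSpace Ω]
    {μ : Measure Ω} {p : ENNReal} {f : Ω → EuclideanSpace 𝕜 ι} (hf : MemLp f p μ) (i : ι) :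
    MemLp (fun ω ↦ f ω i) p μ :=
  (EuclideanSpace.proj (𝕜 := 𝕜) i).comp_memLp' hf

namespace ProbabilityTheory

variable {Ω : Type*} [MeasurableSpace Ω] {μ : Measure Ω}

theorem covariance_fun_sum_fun_sum_of_uncorrelated [IsFiniteMeasure μ] {ι : Type*} [DecidableEq ι]
    {X Z : ι → Ω → ℝ} (hX : ∀ i, MemLp (X i) 2 μ) (hZ : ∀ i, MemLp (Z i) 2 μ)
    (hXZ : ∀ i j, i ≠ j → cov[X i, Z j; μ] = 0) (u v : ι → ℝ) (s t : Finset ι) :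
    cov[fun ω ↦ ∑ i ∈ s, u i * X i ω, fun ω ↦ ∑ j ∈ t, v j * Z j ω; μ]
      = ∑ i ∈ s ∩ t, u i * v i * cov[X i, Z i; μ] := by
  rw [covariance_fun_sum_fun_sum' (X := fun i ω ↦ u i * X i ω) (Y := fun j ω ↦ v j * Z j ω)
    (fun i _ ↦ (hX i).const_mul _) (fun j _ ↦ (hZ j).const_mul _)]
  have hdiag : ∀ i j, cov[fun ω ↦ u i * X i ω, fun ω ↦ v j * Z j ω; μ]
      = if i = j then u i * v i * cov[X i, Z i; μ] else 0 := by
    intro i j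
    rw [covariance_const_mul_left, covariance_const_mul_right]
    split_ifs with h
    · subst h; ring
    · rw [hXZ i j h, mul_zero, mul_zero]
  simp_rw [hdiag, sum_ite_eq, ← sum_filter, filter_mem_eq_inter]

theorem iIndepFun.covariance_apply_eq_zero {ι κ : Type*} [Fintype κ]
    {Y : ι → Ω → EuclideanSpace ℝ κ} (hY : iIndepFun Y μ) (hL2 : ∀ t, MemLp (Y t) 2 μ)
    {s t : ι} (hst : s ≠ t) (i j : κ) :
    cov[fun ω ↦ Y s ω i, fun ω ↦ Y t ω j; μ] = 0 :=
  ((hY.indepFun hst).comp (EuclideanSpace.proj (𝕜 := ℝ) i).measurable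
      (EuclideanSpace.proj (𝕜 := ℝ) j).measurable).covariance_eq_zero
    (EuclideanSpace.memLp_apply (hL2 s) i) (EuclideanSpace.memLp_apply (hL2 t) j)

end ProbabilityTheory

section EMA

variable {Ω : Type*} [MeasurableSpace Ω] {μ : Measure Ω} {η : ℝ}

theorem integrable_ema {E : Type*} [NormedAddCommGroup E] [NormedSpace ℝ E] {θ1 : E}
    {Y θ : ℕ → Ω → E} [IsFiniteMeasure μ] (hY : ∀ t, Integrable (Y t) μ) (hinit : ∀ ω, θ 1 ω = θ1)
    (hstep : ∀ t ω, θ (t + 1) ω = (1 - η) • θ t ω + η • Y t ω) {n : ℕ} (hn : 1 ≤ n) :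
    Integrable (θ n) μ := by
  rw [ema_eq_sum hinit hstep hn]
  exact (integrable_const _).add (integrable_finsetSum _ fun t _ ↦ (hY t).smul _)

theorem covariance_ema_apply [IsProbabilityMeasure μ] {κ : Type*} [Fintype κ]
    {θ1 : EuclideanSpace ℝ κ} {Y θ : ℕ → Ω → EuclideanSpace ℝ κ}
    (hL2 : ∀ t, MemLp (Y t) 2 μ) (hindep : iIndepFun Y μ) (hinit : ∀ ω, θ 1 ω = θ1)
    (hstep : ∀ t ω, θ (t + 1) ω = (1 - η) • θ t ω + η • Y t ω) {a b : ℕ} (ha : 1 ≤ a) (hb : 1 ≤ b)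
    (i j : κ) :
    cov[fun ω ↦ θ a ω i, fun ω ↦ θ b ω j; μ] = ∑ t ∈ Ico 1 a ∩ Ico 1 b,
      emaWeight η a t * emaWeight η b t * cov[fun ω ↦ Y t ω i, fun ω ↦ Y t ω j; μ] := by
  have hY : ∀ k t, MemLp (fun ω ↦ Y t ω k) 2 μ := fun k t ↦ EuclideanSpace.memLp_apply (hL2 t) k
  have hcoord : ∀ n, 1 ≤ n → ∀ k, (fun ω ↦ θ n ω k) = fun ω ↦
      (1 - η) ^ (n - 1) * θ1 k + ∑ t ∈ Ico 1 n, emaWeight η n t * Y t ω k := fun n hn k ↦ by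
    ext ω
    simp [ema_eq_sum hinit hstep hn]
  rw [hcoord a ha, hcoord b hb, covariance_const_add_left, covariance_const_add_right]
  · exact covariance_fun_sum_fun_sum_of_uncorrelated (hY i) (hY j)
      (fun _ _ hst ↦ hindep.covariance_apply_eq_zero hL2 hst i j) _ _ _ _
  all_goals exact integrable_finsetSum _ fun t _ ↦ ((hY _ t).integrable one_le_two).const_mul _

end EMA

theorem sgd_mean_estimation_cov_decay_general {p : ℕ} {Ω : Type*} [MeasurableSpace Ω]
    (μ : Measure Ω) [IsProbabilityMeasure μ]
    (θhat : EuclideanSpace ℝ (Fin p)) (Sig : Matrix (Fin p) (Fin p) ℝ)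
    (Y : ℕ → Ω → EuclideanSpace ℝ (Fin p))
    (hL2 : ∀ t, MemLp (Y t) 2 μ)
    (hindep : ProbabilityTheory.iIndepFun (m := fun _ => inferInstance) Y μ)
    (hmean : ∀ t, ∫ ω, Y t ω ∂μ = θhat)
    (hcov : ∀ t i j, ∫ ω, (Y t ω i - θhat i) * (Y t ω j - θhat j) ∂μ = Sig i j)
    (θ1 : EuclideanSpace ℝ (Fin p)) :
    ∃ K : ℝ, 0 ≤ K ∧
      ∀ η : ℝ, 0 < η → η < 1 →
        ∀ θseq : ℕ → Ω → EuclideanSpace ℝ (Fin p),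
          (∀ ω, θseq 1 ω = θ1) →
          (∀ t ω, θseq (t + 1) ω = (1 - η) • θseq t ω + η • Y t ω) →
          ∀ a b : ℕ, 1 ≤ a → 1 ≤ b →
            ‖Matrix.toEuclideanCLM (𝕜 := ℝ) (Matrix.of fun i j =>
                ∫ ω, (θseq a ω i - (∫ ω', θseq a ω' ∂μ) i)
                    * (θseq b ω j - (∫ ω', θseq b ω' ∂μ) j) ∂μ)‖
              ≤ K * η * (1 - η) ^ ((a : ℤ) - b).natAbs := by
  refine ⟨‖Matrix.toEuclideanCLM (𝕜 := ℝ) Sig‖, norm_nonneg _, ?_⟩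
  intro η hη0 hη1 θseq hinit hstep a b ha hb
  have hY : ∀ t, Integrable (Y t) μ := fun t ↦ (hL2 t).integrable one_le_two
  have hYcov : ∀ t i j, cov[fun ω ↦ Y t ω i, fun ω ↦ Y t ω j; μ] = Sig i j := fun t i j ↦ by
    rw [covariance, ← EuclideanSpace.integral_apply (hY t), ← EuclideanSpace.integral_apply (hY t),
      hmean]
    exact hcov t i j
  have hM : (Matrix.of fun i j ↦ ∫ ω, (θseq a ω i - (∫ ω', θseq a ω' ∂μ) i)
      * (θseq b ω j - (∫ ω', θseq b ω' ∂μ) j) ∂μ)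
      = (∑ t ∈ Ico 1 a ∩ Ico 1 b, emaWeight η a t * emaWeight η b t) • Sig := by
    ext i j
    rw [Matrix.of_apply, EuclideanSpace.integral_apply (integrable_ema hY hinit hstep ha),
      EuclideanSpace.integral_apply (integrable_ema hY hinit hstep hb)]
    change cov[fun ω ↦ θseq a ω i, fun ω ↦ θseq b ω j; μ] = _
    simp [covariance_ema_apply hL2 hindep hinit hstep ha hb, hYcov, sum_mul]
  have hsub : Ico 1 a ∩ Ico 1 b ⊆ range (min a b) := fun t ht ↦ by
    simp only [mem_inter, mem_Ico, mem_range] at ht ⊢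
    omega
  rw [hM, map_smul, norm_smul, Real.norm_eq_abs]
  calc _ ≤ η * (1 - η) ^ ((a : ℤ) - b).natAbs * ‖Matrix.toEuclideanCLM (𝕜 := ℝ) Sig‖ :=
        mul_le_mul_of_nonneg_right (abs_sum_emaWeight_mul_emaWeight_le hη0 hη1.le a b hsub)
          (norm_nonneg _)
    _ = _ := by ring

/-- For the exponential-moving-average SGD recursion `θ_{t+1} = (1−η)θ_t + ηY_t` with i.i.d.
`Y_t` of mean `θ̂` and covariance `Σ`, there is a constant `K` (depending only on the data and
`θ_1`) such that `‖Cov(θ_a, θ_b)‖₂ ≤ K η (1−η)^{|a−b|}` uniformly over `a, b`. -/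
theorem sgd_mean_estimation_cov_decay {p : ℕ} {Ω : Type*} [MeasurableSpace Ω]
    (μ : Measure Ω) [IsProbabilityMeasure μ]
    (θhat : EuclideanSpace ℝ (Fin p)) (Sig : Matrix (Fin p) (Fin p) ℝ)
    (Y : ℕ → Ω → EuclideanSpace ℝ (Fin p))
    (hmeas : ∀ t, Measurable (Y t)) (hL2 : ∀ t, MemLp (Y t) 2 μ)
    (hindep : ProbabilityTheory.iIndepFun (m := fun _ => inferInstance) Y μ)
    (hident : ∀ t, μ.map (Y t) = μ.map (Y 0))
    (hmean : ∀ t, ∫ ω, Y t ω ∂μ = θhat)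
    (hcov : ∀ t i j, ∫ ω, (Y t ω i - θhat i) * (Y t ω j - θhat j) ∂μ = Sig i j)
    (θ1 : EuclideanSpace ℝ (Fin p)) :
    ∃ K : ℝ, 0 ≤ K ∧
      ∀ η : ℝ, 0 < η → η < 1 →
        ∀ θseq : ℕ → Ω → EuclideanSpace ℝ (Fin p),
          (∀ ω, θseq 1 ω = θ1) →
          (∀ t ω, θseq (t + 1) ω = (1 - η) • θseq t ω + η • Y t ω) →
          ∀ a b : ℕ, 1 ≤ a → 1 ≤ b →
            ‖Matrix.toEuclideanCLM (𝕜 := ℝ) (Matrix.of fun i j =>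
                ∫ ω, (θseq a ω i - (∫ ω', θseq a ω' ∂μ) i)
                    * (θseq b ω j - (∫ ω', θseq b ω' ∂μ) j) ∂μ)‖
              ≤ K * η * (1 - η) ^ ((a : ℤ) - b).natAbs :=
  sgd_mean_estimation_cov_decay_general μ θhat Sig Y hL2 hindep hmean hcov θ1
end

section
/- Let k : ℝ^p → ℝ be convex, differentiable, with minimizer θ̂, and suppose there exist constants with ∇k(θ̂ + tu)ᵀu ≥ m for all t ≥ t₀ and unit vectors u along any fixed direction (from local strong convexity near θ̂ with parameter λ_L and Taylor-remainder bound E). Then f(θ) = (1/2)(c + k(θ))² with c > 0 satisfies the weak strong convexity condition ∇f(θ)ᵀ(θ − θ̂) ≥ α‖θ − θ̂‖₂² for some α > 0 depending on λ_L, E, c. -/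
/-!
Near `θ̂` the Hessian bound and the Taylor remainder give `⟪∇k θ, θ - θ̂⟫ ≥ (λ_L / 2) ‖θ - θ̂‖²`
on the ball of radius `ρ = λ_L / (2E)`. Applied at the midpoint of `θ̂` and a point of the sphere
of radius `ρ`, this bound and the subgradient inequality show that `k` exceeds `k θ̂` by a fixed
amount on that sphere; convexity along rays then gives linear growth
`k θ - k θ̂ ≥ (λ_L ρ / 8) ‖θ - θ̂‖` outside the ball. Since `∇f = (c + k) ∇k` and
`⟪∇k θ, θ - θ̂⟫ ≥ k θ - k θ̂ ≥ 0`, the inner product `⟪∇f θ, θ - θ̂⟫` is at least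
`(c + k θ̂) (λ_L / 2) ‖θ - θ̂‖²` inside the ball and at least `(k θ - k θ̂)²` outside it.
-/

open Set

section NormedSpace

variable {E : Type*} [NormedAddCommGroup E] [NormedSpace ℝ E]

theorem ConvexOn.add_fderiv_sub_le {f : E → ℝ} {f' : E →L[ℝ] ℝ} {x : E}
    (hf : ConvexOn ℝ univ f) (hx : HasFDerivAt f f' x) (y : E) :
    f x + f' (y - x) ≤ f y := by
  have hline : ConvexOn ℝ univ (fun s : ℝ => f (x + s • (y - x))) := by
    simpa [Function.comp_def, AffineMap.lineMap_apply_module', add_comm] using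
      hf.comp_affineMap (AffineMap.lineMap x y)
  have hderiv : HasDerivAt (fun s : ℝ => f (x + s • (y - x))) (f' (y - x)) 0 := by
    have hpath : HasDerivAt (fun s : ℝ => x + s • (y - x)) (y - x) 0 := by
      simpa using ((hasDerivAt_id (0 : ℝ)).smul_const (y - x)).const_add x
    exact hx.comp_hasDerivAt_of_eq 0 hpath (by simp)
  have := hline.le_slope_of_hasDerivAt (mem_univ 0) (mem_univ 1) one_pos hderiv
  simp only [slope_def_field, zero_smul, add_zero, one_smul, add_sub_cancel, sub_zero,
    div_one] at this
  linarith

theorem ConvexOn.div_mul_norm_sub_le_sub {k : E → ℝ} {x y : E} {r m : ℝ}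
    (hk : ConvexOn ℝ univ k) (hr : 0 < r) (hsphere : ∀ z, ‖z - x‖ = r → m ≤ k z - k x)
    (hy : r ≤ ‖y - x‖) : m / r * ‖y - x‖ ≤ k y - k x := by
  set t := ‖y - x‖
  have ht : 0 < t := hr.trans_le hy
  set b := r / t
  have hb : 0 < b := div_pos hr ht
  have hb1 : b ≤ 1 := (div_le_one ht).mpr hy
  have hz : ‖(1 - b) • x + b • y - x‖ = r := by
    rw [show (1 - b) • x + b • y - x = b • (y - x) by module, norm_smul,
      Real.norm_of_nonneg hb.le, div_mul_cancel₀ r ht.ne']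
  have hconv := hk.2 (mem_univ x) (mem_univ y) (sub_nonneg.mpr hb1) hb.le (sub_add_cancel 1 b)
  have hm : m ≤ b * (k y - k x) := by
    have := hsphere _ hz
    simp only [smul_eq_mul] at hconv
    linarith
  calc m / r * t = m / b := by rw [div_mul_eq_mul_div, div_div_eq_mul_div]
    _ ≤ k y - k x := (div_le_iff₀' hb).mpr hm

end NormedSpace

section InnerProductSpace

variable {E : Type*} [NormedAddCommGroup E] [InnerProductSpace ℝ E]

theorem sub_mul_mul_sq_le_inner {g h d : E} {a b : ℝ}
    (hh : a * ‖d‖ ^ 2 ≤ inner ℝ d h) (hg : ‖g - h‖ ≤ b * ‖d‖ ^ 2) :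
    (a - b * ‖d‖) * ‖d‖ ^ 2 ≤ inner ℝ g d := by
  have hsplit : inner ℝ g d = inner ℝ h d + inner ℝ (g - h) d := by
    rw [← inner_add_left, add_sub_cancel]
  have hrem : |inner ℝ (g - h) d| ≤ b * ‖d‖ ^ 2 * ‖d‖ :=
    (abs_real_inner_le_norm _ _).trans (mul_le_mul_of_nonneg_right hg (norm_nonneg d))
  rw [real_inner_comm h d] at hh
  rw [hsplit]
  nlinarith [(abs_le.mp hrem).1]

variable [CompleteSpace E]

theorem ConvexOn.add_inner_gradient_sub_le {f : E → ℝ} {x : E}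
    (hf : ConvexOn ℝ univ f) (hx : DifferentiableAt ℝ f x) (y : E) :
    f x + inner ℝ (gradient f x) (y - x) ≤ f y := by
  simpa using hf.add_fderiv_sub_le hx.hasGradientAt.hasFDerivAt y

theorem gradient_half_sq_const_add {k : E → ℝ} {x : E} (hk : DifferentiableAt ℝ k x) (c : ℝ) :
    gradient (fun y => 1 / 2 * (c + k y) ^ 2) x = (c + k x) • gradient k x := by
  have hsq : HasDerivAt (fun s : ℝ => 1 / 2 * (c + s) ^ 2) (c + k x) (k x) := by
    refine ((((hasDerivAt_id' (k x)).const_add c).fun_pow 2).const_mul (1 / 2 : ℝ)).congr_deriv ?_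
    norm_num
    ring
  refine HasGradientAt.gradient ?_
  rw [hasGradientAt_iff_hasFDerivAt, map_smul]
  exact hsq.comp_hasFDerivAt x hk.hasGradientAt.hasFDerivAt

theorem ConvexOn.le_sub_of_le_inner_gradient_midpoint {k : E → ℝ} {x y : E} {μ : ℝ}
    (hk : ConvexOn ℝ univ k) (hd : DifferentiableAt ℝ k (midpoint ℝ x y))
    (hx : k x ≤ k (midpoint ℝ x y))
    (hμ : μ ≤ inner ℝ (gradient k (midpoint ℝ x y)) (midpoint ℝ x y - x)) :
    μ ≤ k y - k x := by
  have := hk.add_inner_gradient_sub_le hd y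
  rw [right_sub_midpoint, ← midpoint_sub_left] at this
  linarith

theorem ConvexOn.mul_norm_sub_le_sub_of_local_quadratic {k : E → ℝ} {x y : E} {a ρ : ℝ}
    (hk : ConvexOn ℝ univ k) (hd : Differentiable ℝ k) (hmin : ∀ z, k x ≤ k z) (hρ : 0 < ρ)
    (hloc : ∀ z, ‖z - x‖ ≤ ρ → a * ‖z - x‖ ^ 2 ≤ inner ℝ (gradient k z) (z - x))
    (hy : ρ ≤ ‖y - x‖) : a * ρ / 4 * ‖y - x‖ ≤ k y - k x := by
  have hsphere : ∀ z, ‖z - x‖ = ρ → a * (ρ / 2) ^ 2 ≤ k z - k x := by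
    intro z hz
    have hmid : ‖midpoint ℝ x z - x‖ = ρ / 2 := by
      rw [midpoint_sub_left, norm_smul, hz]
      norm_num
      ring
    refine hk.le_sub_of_le_inner_gradient_midpoint (hd _) (hmin _) ?_
    have := hloc (midpoint ℝ x z) (by rw [hmid]; linarith)
    rwa [hmid] at this
  convert hk.div_mul_norm_sub_le_sub hρ hsphere hy using 2
  field_simp
  ring

theorem ConvexOn.exists_mul_norm_sq_le_mul_inner_gradient {k : E → ℝ} {x : E} {a ρ c : ℝ}
    (hk : ConvexOn ℝ univ k) (hd : Differentiable ℝ k) (hmin : ∀ z, k x ≤ k z)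
    (ha : 0 < a) (hρ : 0 < ρ)
    (hloc : ∀ z, ‖z - x‖ ≤ ρ → a * ‖z - x‖ ^ 2 ≤ inner ℝ (gradient k z) (z - x))
    (hc : 0 < c + k x) :
    ∃ α : ℝ, 0 < α ∧ ∀ y, α * ‖y - x‖ ^ 2 ≤ (c + k y) * inner ℝ (gradient k y) (y - x) := by
  refine ⟨min ((c + k x) * a) ((a * ρ / 4) ^ 2), by positivity, fun y => ?_⟩
  have hsub : k y - k x ≤ inner ℝ (gradient k y) (y - x) := by
    have := hk.add_inner_gradient_sub_le (hd y) x
    rw [← neg_sub, inner_neg_right] at this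
    linarith
  have hgap : 0 ≤ k y - k x := sub_nonneg.mpr (hmin y)
  rcases le_total ‖y - x‖ ρ with hnear | hfar
  · calc min ((c + k x) * a) ((a * ρ / 4) ^ 2) * ‖y - x‖ ^ 2
          ≤ (c + k x) * (a * ‖y - x‖ ^ 2) := by
            rw [← mul_assoc]; gcongr; exact min_le_left _ _
      _ ≤ (c + k y) * inner ℝ (gradient k y) (y - x) := by
            gcongr
            · linarith
            · linarith [hmin y]
            · exact hloc y hnear
  · have hgrowth := hk.mul_norm_sub_le_sub_of_local_quadratic hd hmin hρ hloc hfar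
    calc min ((c + k x) * a) ((a * ρ / 4) ^ 2) * ‖y - x‖ ^ 2
          ≤ (a * ρ / 4 * ‖y - x‖) ^ 2 := by
            rw [mul_pow]; gcongr; exact min_le_right _ _
      _ ≤ (k y - k x) * (k y - k x) := by
            rw [sq]; gcongr
      _ ≤ (c + k y) * inner ℝ (gradient k y) (y - x) :=
            mul_le_mul (by linarith) hsub hgap (by linarith [hmin y])

end InnerProductSpace

/-- Weak strong convexity of the squared logistic risk: if `k` is convex, differentiable,
minimized at `θ̂`, with Hessian at `θ̂` bounded below by `λ_L > 0` and Taylor remainder of the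
gradient bounded by `E‖θ − θ̂‖²`, then `f(θ) = (1/2)(c + k(θ))²` with `c > 0` satisfies
`⟪∇f(θ), θ − θ̂⟫ ≥ α ‖θ − θ̂‖²` for some `α > 0`. -/
theorem squared_logistic_weak_strong_convexity {p : ℕ}
    (k : EuclideanSpace ℝ (Fin p) → ℝ)
    (hk : ConvexOn ℝ Set.univ k) (hk0 : ∀ θ, 0 ≤ k θ)
    (hsmooth : ContDiff ℝ 2 k)
    (θhat : EuclideanSpace ℝ (Fin p)) (hmin : ∀ θ, k θhat ≤ k θ)
    (lamL Ec : ℝ) (hlam : 0 < lamL) (hEc : 0 < Ec)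
    (hhess : ∀ v : EuclideanSpace ℝ (Fin p),
      lamL * ‖v‖ ^ 2 ≤ (inner ℝ v (fderiv ℝ (fun θ => gradient k θ) θhat v) : ℝ))
    (htaylor : ∀ θ,
      ‖gradient k θ - fderiv ℝ (fun θ' => gradient k θ') θhat (θ - θhat)‖
        ≤ Ec * ‖θ - θhat‖ ^ 2)
    (c : ℝ) (hc : 0 < c)
    (f : EuclideanSpace ℝ (Fin p) → ℝ)
    (hf : f = fun θ => (1 / 2) * (c + k θ) ^ 2) :
    ∃ α : ℝ, 0 < α ∧
      ∀ θ, α * ‖θ - θhat‖ ^ 2 ≤ (inner ℝ (gradient f θ) (θ - θhat) : ℝ) := by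
  have hd : Differentiable ℝ k := hsmooth.differentiable two_ne_zero
  have hloc : ∀ θ, ‖θ - θhat‖ ≤ lamL / (2 * Ec) →
      lamL / 2 * ‖θ - θhat‖ ^ 2 ≤ inner ℝ (gradient k θ) (θ - θhat) := by
    intro θ hθ
    have hsmall : Ec * ‖θ - θhat‖ ≤ lamL / 2 := by
      rw [le_div_iff₀ (by positivity)] at hθ
      linarith
    have := sub_mul_mul_sq_le_inner (hhess (θ - θhat)) (htaylor θ)
    nlinarith [sq_nonneg ‖θ - θhat‖]
  obtain ⟨α, hα, hbound⟩ := hk.exists_mul_norm_sq_le_mul_inner_gradient hd hmin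
    (half_pos hlam) (by positivity) hloc (by linarith [hk0 θhat])
  refine ⟨α, hα, fun θ => ?_⟩
  rw [hf, gradient_half_sq_const_add (hd θ), real_inner_smul_left]
  exact hbound θ
end

section
/- In linear regression with mini-batch sampling with replacement (batch size S), the stochastic gradient g_s(θ) = (1/S)∑_{i∈I} xᵢ(xᵢᵀθ − yᵢ) satisfies E[‖g_s(θ)‖₂² | θ] ≤ (L²(1 − 1/S) + (2/(Sn))∑‖xᵢ‖₂⁴)‖θ − θ̂‖₂² + (2/(Sn))∑‖xᵢxᵢᵀθ̂ − yᵢxᵢ‖₂², where L is the Lipschitz constant of the full gradient and θ̂ the empirical minimizer. -/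
/-!
Write `gᵢ(θ) = (xᵢᵀθ − yᵢ)xᵢ` and `δ = θ − θ̂`. Minimality of `θ̂` gives the normal equations
`∑ gᵢ(θ̂) = 0`, so `gᵢ(θ) = (xᵢᵀδ)xᵢ + gᵢ(θ̂)` and the full gradient `(1/n)∑ gᵢ(θ)` is `Hδ` with
`H = (1/n)∑ xᵢxᵢᵀ`, of norm at most `L‖δ‖`. For `S` independent uniform indices the second moment
of the batch average is exactly
`E‖(1/S)∑ⱼ g_{Iⱼ}‖² = (1/(Sn))∑ ‖gᵢ‖² + (1 − 1/S)‖(1/n)∑ gᵢ‖²`,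
and `‖gᵢ(θ)‖² ≤ 2‖xᵢ‖⁴‖δ‖² + 2‖gᵢ(θ̂)‖²` bounds the first term.
-/

open Finset RealInnerProductSpace

section BatchSampling

variable {α E : Type*} [Fintype α]

lemma sum_fin_succ_pi [AddCommMonoid E] {S : ℕ} (F : (Fin (S + 1) → α) → E) :
    ∑ I, F I = ∑ a, ∑ I : Fin S → α, F (Fin.cons a I) := by
  rw [← Fintype.sum_equiv (Fin.consEquiv fun _ => α) _ F fun _ => rfl, Fintype.sum_prod_type]
  rfl

lemma card_nsmul_sum_pi_sum_comp [AddCommMonoid E] (g : α → E) (S : ℕ) :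
    Fintype.card α • ∑ I : Fin S → α, ∑ j, g (I j) = (S * Fintype.card α ^ S) • ∑ a, g a := by
  induction S with
  | zero => simp
  | succ S ih =>
    simp only [sum_fin_succ_pi, Fin.sum_univ_succ, Fin.cons_zero, Fin.cons_succ, sum_add_distrib,
      sum_const, card_univ, Fintype.card_pi_const, ← smul_sum, ih, smul_smul, ← add_smul]
    ring_nf

variable [NormedAddCommGroup E] [InnerProductSpace ℝ E]

lemma card_sq_mul_sum_pi_norm_sum_comp_sq (g : α → E) (S : ℕ) :
    (Fintype.card α : ℝ) ^ 2 * ∑ I : Fin S → α, ‖∑ j, g (I j)‖ ^ 2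
      = S * Fintype.card α ^ (S + 1) * ∑ a, ‖g a‖ ^ 2
        + S * (S - 1) * Fintype.card α ^ S * ‖∑ a, g a‖ ^ 2 := by
  induction S with
  | zero => simp
  | succ S ih =>
    have cross : (Fintype.card α : ℝ) * ∑ a, ∑ I : Fin S → α, ⟪g a, ∑ j, g (I j)⟫
        = S * Fintype.card α ^ S * ‖∑ a, g a‖ ^ 2 := by
      simp only [← inner_sum, ← sum_inner]
      rw [← real_inner_smul_right, Nat.cast_smul_eq_nsmul, card_nsmul_sum_pi_sum_comp,
        ← Nat.cast_smul_eq_nsmul ℝ, real_inner_smul_right, real_inner_self_eq_norm_sq]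
      push_cast
      ring
    simp only [sum_fin_succ_pi, Fin.sum_univ_succ, Fin.cons_zero, Fin.cons_succ, norm_add_sq_real,
      sum_add_distrib, sum_const, card_univ, Fintype.card_pi_const, ← mul_sum, nsmul_eq_mul]
    push_cast
    linear_combination 2 * (Fintype.card α : ℝ) * cross + (Fintype.card α : ℝ) * ih

lemma batch_mean_second_moment_eq [Nonempty α] {S : ℕ} (hS : 0 < S) (g : α → E) :
    ((Fintype.card α : ℝ) ^ S)⁻¹ * ∑ I : Fin S → α, ‖(S : ℝ)⁻¹ • ∑ j, g (I j)‖ ^ 2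
      = ((S : ℝ) * Fintype.card α)⁻¹ * ∑ a, ‖g a‖ ^ 2
        + (1 - (S : ℝ)⁻¹) * ‖(Fintype.card α : ℝ)⁻¹ • ∑ a, g a‖ ^ 2 := by
  have hn : (Fintype.card α : ℝ) ≠ 0 := by positivity
  have hS : (S : ℝ) ≠ 0 := by positivity
  simp only [norm_smul, mul_pow, norm_inv, Real.norm_natCast, ← mul_sum]
  field_simp
  linear_combination card_sq_mul_sum_pi_norm_sum_comp_sq g S

end BatchSampling

lemma least_squares_normal_equation {ι E : Type*} [Fintype ι] [NormedAddCommGroup E]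
    [InnerProductSpace ℝ E] (x : ι → E) (y : ι → ℝ) (θhat : E)
    (hmin : ∀ θ, ∑ i, (⟪x i, θhat⟫ - y i) ^ 2 ≤ ∑ i, (⟪x i, θ⟫ - y i) ^ 2) :
    ∑ i, (⟪x i, θhat⟫ - y i) • x i = 0 := by
  set G := ∑ i, (⟪x i, θhat⟫ - y i) • x i
  have hG : ∑ i, (⟪x i, θhat⟫ - y i) * ⟪x i, G⟫ = ‖G‖ ^ 2 := by
    simp only [← real_inner_self_eq_norm_sq, G, sum_inner, real_inner_smul_left]
  -- the objective at `θhat + t • G`, minus its value at `θhat`, is a quadratic in `t`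
  have hquad : ∀ t : ℝ, 0 ≤ (∑ i, ⟪x i, G⟫ ^ 2) * (t * t) + 2 * ‖G‖ ^ 2 * t + 0 := by
    intro t
    have hle := hmin (θhat + t • G)
    simp only [inner_add_right, real_inner_smul_right] at hle
    have hexpand : ∀ i, (⟪x i, θhat⟫ + t * ⟪x i, G⟫ - y i) ^ 2
        = (⟪x i, θhat⟫ - y i) ^ 2 + 2 * t * ((⟪x i, θhat⟫ - y i) * ⟪x i, G⟫)
          + t * t * ⟪x i, G⟫ ^ 2 := fun i => by ring
    simp only [hexpand, sum_add_distrib, ← mul_sum, hG] at hle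
    linarith
  have hdiscrim : (2 * ‖G‖ ^ 2) ^ 2 ≤ 0 := by simpa [discrim] using discrim_le_zero hquad
  simpa using hdiscrim

lemma toEuclideanCLM_of_mul_apply {ι : Type*} [Fintype ι] [DecidableEq ι]
    (v w δ : EuclideanSpace ℝ ι) :
    Matrix.toEuclideanCLM (𝕜 := ℝ) (Matrix.of fun a b => v a * w b) δ = ⟪w, δ⟫ • v := by
  apply WithLp.ofLp_injective
  rw [Matrix.ofLp_toEuclideanCLM]
  ext a
  simp [Matrix.mulVec, dotProduct, PiLp.inner_apply, mul_sum, mul_assoc, mul_comm]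

lemma norm_inner_smul_add_sq_le {E : Type*} [NormedAddCommGroup E] [InnerProductSpace ℝ E]
    (x δ h : E) : ‖⟪x, δ⟫ • x + h‖ ^ 2 ≤ 2 * ‖x‖ ^ 4 * ‖δ‖ ^ 2 + 2 * ‖h‖ ^ 2 := by
  have hrank_one : ‖⟪x, δ⟫ • x‖ ≤ ‖x‖ ^ 2 * ‖δ‖ := by
    rw [norm_smul, sq, mul_right_comm]
    gcongr
    exact norm_inner_le_norm x δ
  calc ‖⟪x, δ⟫ • x + h‖ ^ 2 ≤ (‖⟪x, δ⟫ • x‖ + ‖h‖) ^ 2 := by gcongr; exact norm_add_le _ _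
    _ ≤ 2 * (‖⟪x, δ⟫ • x‖ ^ 2 + ‖h‖ ^ 2) := add_sq_le
    _ ≤ 2 * ((‖x‖ ^ 2 * ‖δ‖) ^ 2 + ‖h‖ ^ 2) := by gcongr
    _ = 2 * ‖x‖ ^ 4 * ‖δ‖ ^ 2 + 2 * ‖h‖ ^ 2 := by ring

/-- Second moment of the mini-batch (with replacement, batch size `S`) stochastic gradient in
linear regression: the expectation over the uniformly random index sequence `I : Fin S → Fin n`
of `‖(1/S)∑_{j} x_{I(j)}(x_{I(j)}ᵀθ − y_{I(j)})‖²` is at most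
`(L²(1 − 1/S) + (2/(Sn))∑‖xᵢ‖⁴)‖θ − θ̂‖² + (2/(Sn))∑‖xᵢxᵢᵀθ̂ − yᵢxᵢ‖²`,
where `L = ‖(1/n)∑xᵢxᵢᵀ‖₂` and `θ̂` is the empirical least-squares minimizer. -/
theorem linear_regression_sg_second_moment {p n S : ℕ} (hn : 0 < n) (hS : 0 < S)
    (x : Fin n → EuclideanSpace ℝ (Fin p)) (y : Fin n → ℝ)
    (θhat : EuclideanSpace ℝ (Fin p))
    (hmin : ∀ θ : EuclideanSpace ℝ (Fin p),
      (2 * n : ℝ)⁻¹ * ∑ i, ((inner ℝ (x i) θhat : ℝ) - y i) ^ 2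
        ≤ (2 * n : ℝ)⁻¹ * ∑ i, ((inner ℝ (x i) θ : ℝ) - y i) ^ 2)
    (L : ℝ)
    (hL : L = ‖Matrix.toEuclideanCLM (𝕜 := ℝ)
        ((n : ℝ)⁻¹ • ∑ i, Matrix.of (fun a b => x i a * x i b))‖)
    (θ : EuclideanSpace ℝ (Fin p)) :
    ((n : ℝ) ^ S)⁻¹ * ∑ I : Fin S → Fin n,
        ‖(S : ℝ)⁻¹ • ∑ j, (((inner ℝ (x (I j)) θ : ℝ) - y (I j)) • x (I j))‖ ^ 2
      ≤ (L ^ 2 * (1 - (S : ℝ)⁻¹) + 2 / (S * n : ℝ) * ∑ i, ‖x i‖ ^ 4) * ‖θ - θhat‖ ^ 2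
        + 2 / (S * n : ℝ) * ∑ i, ‖((inner ℝ (x i) θhat : ℝ) - y i) • x i‖ ^ 2 := by
  have hne : Nonempty (Fin n) := ⟨⟨0, hn⟩⟩
  set δ := θ - θhat with hδ
  have hdecomp : ∀ i, (⟪x i, θ⟫ - y i) • x i = ⟪x i, δ⟫ • x i + (⟪x i, θhat⟫ - y i) • x i :=
    fun i => by rw [hδ, inner_sub_right, ← add_smul, sub_add_sub_cancel]
  have hnormal : ∑ i, (⟪x i, θhat⟫ - y i) • x i = 0 :=
    least_squares_normal_equation x y θhat fun θ => le_of_mul_le_mul_left (hmin θ) (by positivity)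
  have hmean : ‖(n : ℝ)⁻¹ • ∑ i, (⟪x i, θ⟫ - y i) • x i‖ ≤ L * ‖δ‖ := by
    rw [hL]
    refine (congrArg norm ?_).trans_le (ContinuousLinearMap.le_opNorm _ δ)
    simp only [hdecomp, sum_add_distrib, hnormal, add_zero, map_smul, map_sum,
      FunLike.coe_smul, FunLike.coe_sum, Pi.smul_apply, Finset.sum_apply,
      toEuclideanCLM_of_mul_apply]
  have hvar : ∑ i, ‖(⟪x i, θ⟫ - y i) • x i‖ ^ 2
      ≤ ∑ i, (2 * ‖x i‖ ^ 4 * ‖δ‖ ^ 2 + 2 * ‖(⟪x i, θhat⟫ - y i) • x i‖ ^ 2) :=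
    sum_le_sum fun i _ => hdecomp i ▸ norm_inner_smul_add_sq_le (x i) δ _
  have hweight : 0 ≤ 1 - (S : ℝ)⁻¹ :=
    sub_nonneg.2 (inv_le_one_of_one_le₀ (by exact_mod_cast hS))
  calc _ = (S * n : ℝ)⁻¹ * ∑ i, ‖(⟪x i, θ⟫ - y i) • x i‖ ^ 2
          + (1 - (S : ℝ)⁻¹) * ‖(n : ℝ)⁻¹ • ∑ i, (⟪x i, θ⟫ - y i) • x i‖ ^ 2 := by
          simpa only [Fintype.card_fin] using
            batch_mean_second_moment_eq hS fun i => (⟪x i, θ⟫ - y i) • x i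
    _ ≤ (S * n : ℝ)⁻¹ * ∑ i, (2 * ‖x i‖ ^ 4 * ‖δ‖ ^ 2 + 2 * ‖(⟪x i, θhat⟫ - y i) • x i‖ ^ 2)
          + (1 - (S : ℝ)⁻¹) * (L * ‖δ‖) ^ 2 := by gcongr
    _ = _ := by rw [sum_add_distrib, ← sum_mul, ← mul_sum, ← mul_sum]; ring
end
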